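/- Let I₁ ≠ 0, I₂, I₃, J₁, J₂ > 0, c_u, c_y, c_v be real constants and consider the geodesic family u(s) = −I₁ s + c_u, y(s) = I₃ s + c_y, z(s) = √(((2J₂ s + J₁)² + 8 I₁²)/(4 J₂)), v(s) = √2 · arctan((2J₂ s + J₁)/(2√2 I₁)) − I₂ s + c_v of the Biv pp-wave metric. Then the Hamiltonian constraint with unit potential, H = (1/(2z²))(z²(2 − 2u̇v̇ + ẏ² + ż²) − 2u̇²) = 0, holds along the curve (at one, hence every, value of s) if and only if the constants satisfy J₂ + I₃² − 2 I₁ I₂ + 2 = 0; indeed, along the curve G_{μν} q̇^μ q̇^ν + 2 = J₂ + I₃² − 2 I₁ I₂ + 2 identically. -/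

import Mathlib

/-!
Along the curve `u̇ = −I₁`, `ẏ = I₃` and, writing `w = 2J₂s + J₁` and `D = w² + 8I₁²`, one has
`z² = D/(4J₂)`, `ż = w/(2z)` and `v̇ = 8I₁J₂/D − I₂`. Substituting, the `s`-dependent terms of
`G(q̇, q̇)` combine to `J₂(w² + 8I₁²)/D = J₂`, so the quadratic form is the constant
`J₂ + I₃² − 2I₁I₂`; and `H = (G(q̇, q̇) + 2)/2` wherever `z ≠ 0`.
-/

noncomputable section

namespace BivPPWave

/-- Derivative of the `i`-th component of a curve. -/
def qd (q : ℝ → Fin 4 → ℝ) (i : Fin 4) (s : ℝ) : ℝ :=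
  deriv (fun t => q t i) s

/-- The explicit geodesic family `u(s) = −I₁s + c_u`,
`v(s) = √2·arctan((2J₂s + J₁)/(2√2 I₁)) − I₂s + c_v`, `y(s) = I₃s + c_y`,
`z(s) = √(((2J₂s + J₁)² + 8I₁²)/(4J₂))` of the Biv pp-wave metric. -/
def geoCurve (I₁ I₂ I₃ J₁ J₂ c_u c_y c_v : ℝ) (s : ℝ) : Fin 4 → ℝ :=
  ![-I₁ * s + c_u,
    Real.sqrt 2 * Real.arctan ((2 * J₂ * s + J₁) / (2 * Real.sqrt 2 * I₁)) - I₂ * s + c_v,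
    I₃ * s + c_y,
    Real.sqrt (((2 * J₂ * s + J₁)^2 + 8 * I₁^2) / (4 * J₂))]

open Real

def metricNormSq (q : ℝ → Fin 4 → ℝ) (s : ℝ) : ℝ :=
  -2 * qd q 0 s * qd q 1 s - (2 / q s 3 ^ 2) * qd q 0 s ^ 2 + qd q 2 s ^ 2 + qd q 3 s ^ 2

def hamiltonian (q : ℝ → Fin 4 → ℝ) (s : ℝ) : ℝ :=
  1 / (2 * q s 3 ^ 2)
    * (q s 3 ^ 2 * (2 - 2 * qd q 0 s * qd q 1 s + qd q 2 s ^ 2 + qd q 3 s ^ 2) - 2 * qd q 0 s ^ 2)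

lemma hamiltonian_eq_half_metricNormSq_add_two {q : ℝ → Fin 4 → ℝ} {s : ℝ} (hz : q s 3 ≠ 0) :
    hamiltonian q s = (metricNormSq q s + 2) / 2 := by
  unfold hamiltonian metricNormSq
  field_simp
  ring

lemma hasDerivAt_arctan_affine_div {a b c : ℝ} (hc : c ≠ 0) (s : ℝ) :
    HasDerivAt (fun t => arctan ((a * t + b) / c)) (a * c / ((a * s + b) ^ 2 + c ^ 2)) s := by
  have h := ((((hasDerivAt_id' s).const_mul a).add_const b).div_const c).arctan
  refine h.congr_deriv ?_
  field_simp
  ring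

lemma hasDerivAt_sqrt_sq_add_div {a b k m s : ℝ}
    (hpos : ((a * s + b) ^ 2 + m) / k ≠ 0) :
    HasDerivAt (fun t => √(((a * t + b) ^ 2 + m) / k))
      (a * (a * s + b) / k / √(((a * s + b) ^ 2 + m) / k)) s := by
  have h := (((((hasDerivAt_id' s).const_mul a).add_const b).fun_pow 2).add_const m).div_const k
  refine (h.sqrt hpos).congr_deriv ?_
  field_simp
  ring

section GeoCurve

variable {I₁ I₂ I₃ J₁ J₂ c_u c_y c_v s : ℝ}

lemma geoCurve_three_sq (hJ₂ : 0 ≤ J₂) :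
    geoCurve I₁ I₂ I₃ J₁ J₂ c_u c_y c_v s 3 ^ 2
      = ((2 * J₂ * s + J₁) ^ 2 + 8 * I₁ ^ 2) / (4 * J₂) :=
  sq_sqrt (by positivity)

lemma geoCurve_three_pos (hI₁ : I₁ ≠ 0) (hJ₂ : 0 < J₂) :
    0 < geoCurve I₁ I₂ I₃ J₁ J₂ c_u c_y c_v s 3 :=
  sqrt_pos.2 (by positivity)

lemma qd_geoCurve_zero : qd (geoCurve I₁ I₂ I₃ J₁ J₂ c_u c_y c_v) 0 s = -I₁ :=
  (((hasDerivAt_id s).const_mul (-I₁)).add_const c_u).deriv.trans (mul_one _)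

lemma qd_geoCurve_one (hI₁ : I₁ ≠ 0) :
    qd (geoCurve I₁ I₂ I₃ J₁ J₂ c_u c_y c_v) 1 s
      = 8 * I₁ * J₂ / ((2 * J₂ * s + J₁) ^ 2 + 8 * I₁ ^ 2) - I₂ := by
  have hc : 2 * √2 * I₁ ≠ 0 := by positivity
  have h := (((hasDerivAt_arctan_affine_div (a := 2 * J₂) (b := J₁) hc s).const_mul √2).sub
    ((hasDerivAt_id s).const_mul I₂)).add_const c_v
  refine h.deriv.trans ?_
  have h2 : √2 ^ 2 = 2 := sq_sqrt zero_le_two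
  field_simp
  rw [h2]
  ring

lemma qd_geoCurve_two : qd (geoCurve I₁ I₂ I₃ J₁ J₂ c_u c_y c_v) 2 s = I₃ :=
  (((hasDerivAt_id s).const_mul I₃).add_const c_y).deriv.trans (mul_one _)

lemma qd_geoCurve_three (hI₁ : I₁ ≠ 0) (hJ₂ : 0 < J₂) :
    qd (geoCurve I₁ I₂ I₃ J₁ J₂ c_u c_y c_v) 3 s
      = (2 * J₂ * s + J₁) / (2 * geoCurve I₁ I₂ I₃ J₁ J₂ c_u c_y c_v s 3) := by
  have hz : geoCurve I₁ I₂ I₃ J₁ J₂ c_u c_y c_v s 3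
      = √(((2 * J₂ * s + J₁) ^ 2 + 8 * I₁ ^ 2) / (4 * J₂)) := rfl
  refine (hasDerivAt_sqrt_sq_add_div (by positivity)).deriv.trans ?_
  rw [hz]
  field_simp
  ring

lemma metricNormSq_geoCurve (hI₁ : I₁ ≠ 0) (hJ₂ : 0 < J₂) :
    metricNormSq (geoCurve I₁ I₂ I₃ J₁ J₂ c_u c_y c_v) s = J₂ + I₃ ^ 2 - 2 * I₁ * I₂ := by
  have hz : geoCurve I₁ I₂ I₃ J₁ J₂ c_u c_y c_v s 3 ≠ 0 := (geoCurve_three_pos hI₁ hJ₂).ne'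
  rw [metricNormSq, qd_geoCurve_zero, qd_geoCurve_one hI₁, qd_geoCurve_two,
    qd_geoCurve_three hI₁ hJ₂, div_pow, mul_pow, geoCurve_three_sq hJ₂.le]
  field_simp
  ring

end GeoCurve

/-- Along the explicit geodesic family of the Biv pp-wave metric,
`G_{μν} q̇^μ q̇^ν + 2 = J₂ + I₃² − 2I₁I₂ + 2` identically; hence the Hamiltonian constraint
with unit potential `H = (1/(2z²))(z²(2 − 2u̇v̇ + ẏ² + ż²) − 2u̇²) = 0` holds at one (hence
every) value of `s` if and only if `J₂ + I₃² − 2I₁I₂ + 2 = 0`. -/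
theorem biv_geodesic_constraint_iff
    (I₁ I₂ I₃ J₁ J₂ c_u c_y c_v : ℝ) (hI₁ : I₁ ≠ 0) (hJ₂ : 0 < J₂) :
    -- `G_{μν} q̇^μ q̇^ν + 2 = J₂ + I₃² − 2I₁I₂ + 2` identically along the curve
    (∀ s : ℝ,
      (-2 * qd (geoCurve I₁ I₂ I₃ J₁ J₂ c_u c_y c_v) 0 s
            * qd (geoCurve I₁ I₂ I₃ J₁ J₂ c_u c_y c_v) 1 s
        - (2 / (geoCurve I₁ I₂ I₃ J₁ J₂ c_u c_y c_v s 3)^2)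
            * (qd (geoCurve I₁ I₂ I₃ J₁ J₂ c_u c_y c_v) 0 s)^2
        + (qd (geoCurve I₁ I₂ I₃ J₁ J₂ c_u c_y c_v) 2 s)^2
        + (qd (geoCurve I₁ I₂ I₃ J₁ J₂ c_u c_y c_v) 3 s)^2) + 2
      = J₂ + I₃^2 - 2 * I₁ * I₂ + 2)
    -- the constraint holds at one value of `s` iff the constants relation holds
    ∧ ((∃ s : ℝ,
        (1 / (2 * (geoCurve I₁ I₂ I₃ J₁ J₂ c_u c_y c_v s 3)^2))
          * ((geoCurve I₁ I₂ I₃ J₁ J₂ c_u c_y c_v s 3)^2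
              * (2 - 2 * qd (geoCurve I₁ I₂ I₃ J₁ J₂ c_u c_y c_v) 0 s
                    * qd (geoCurve I₁ I₂ I₃ J₁ J₂ c_u c_y c_v) 1 s
                + (qd (geoCurve I₁ I₂ I₃ J₁ J₂ c_u c_y c_v) 2 s)^2
                + (qd (geoCurve I₁ I₂ I₃ J₁ J₂ c_u c_y c_v) 3 s)^2)
            - 2 * (qd (geoCurve I₁ I₂ I₃ J₁ J₂ c_u c_y c_v) 0 s)^2) = 0)
      ↔ J₂ + I₃^2 - 2 * I₁ * I₂ + 2 = 0)
    -- equivalently, it holds at every value of `s` iff the constants relation holds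
    ∧ ((∀ s : ℝ,
        (1 / (2 * (geoCurve I₁ I₂ I₃ J₁ J₂ c_u c_y c_v s 3)^2))
          * ((geoCurve I₁ I₂ I₃ J₁ J₂ c_u c_y c_v s 3)^2
              * (2 - 2 * qd (geoCurve I₁ I₂ I₃ J₁ J₂ c_u c_y c_v) 0 s
                    * qd (geoCurve I₁ I₂ I₃ J₁ J₂ c_u c_y c_v) 1 s
                + (qd (geoCurve I₁ I₂ I₃ J₁ J₂ c_u c_y c_v) 2 s)^2
                + (qd (geoCurve I₁ I₂ I₃ J₁ J₂ c_u c_y c_v) 3 s)^2)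
            - 2 * (qd (geoCurve I₁ I₂ I₃ J₁ J₂ c_u c_y c_v) 0 s)^2) = 0)
      ↔ J₂ + I₃^2 - 2 * I₁ * I₂ + 2 = 0) := by
  set q := geoCurve I₁ I₂ I₃ J₁ J₂ c_u c_y c_v
  have hG (s : ℝ) : metricNormSq q s + 2 = J₂ + I₃ ^ 2 - 2 * I₁ * I₂ + 2 := by
    rw [metricNormSq_geoCurve hI₁ hJ₂]
  have hH (s : ℝ) : hamiltonian q s = (J₂ + I₃ ^ 2 - 2 * I₁ * I₂ + 2) / 2 := by
    rw [hamiltonian_eq_half_metricNormSq_add_two (geoCurve_three_pos hI₁ hJ₂).ne', hG]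
  show (∀ s, metricNormSq q s + 2 = _) ∧ ((∃ s, hamiltonian q s = 0) ↔ _)
    ∧ ((∀ s, hamiltonian q s = 0) ↔ _)
  simp only [hG, hH, div_eq_zero_iff, two_ne_zero, or_false, exists_const, forall_const,
    and_self]

end BivPPWave

end
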